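/- arXiv:0904.3094 — 2 statements merged into one kernel-verified Lean document; each statement's English description precedes it below -/
import Mathlib

section
/- Let n ≥ 1, ε > 0, let U ⊆ ℝⁿ be open, let H : ℝⁿ → ℝ be continuously differentiable, and let u : U → ℝ be three times continuously differentiable and satisfy H(∇u(x)) = ε Δu(x) for every x ∈ U. Then the function w(x) := |∇u(x)|²/2 satisfies, at every x ∈ U, the identity ∇H(∇u(x)) · ∇w(x) = ε Δw(x) − ε |D²u(x)|². -/
/-!
Differentiate the equation `H(∇u) = ε Δu` in the direction `xₖ`, multiply by `∂ₖu` and sum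
over `k`. Since `∂ᵢw = ∑ₖ ∂ₖu ∂ᵢ∂ₖu` and the Hessian is symmetric, the left side becomes
`∇H(∇u) · ∇w`. The right side is `ε ∇u · ∇Δu`, and the flat Bochner identity
`Δw = |D²u|² + ∇u · ∇Δu` (which uses the symmetry of third derivatives) turns it into
`ε (Δw - |D²u|²)`.
-/

open scoped RealInnerProductSpace

/-- The second partial derivative ∂²u/∂xᵢ∂xₖ of `u` at `x`. -/
noncomputable def pd2 {n : ℕ} (u : EuclideanSpace ℝ (Fin n) → ℝ)
    (x : EuclideanSpace ℝ (Fin n)) (i k : Fin n) : ℝ :=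
  fderiv ℝ (fun y => fderiv ℝ u y (EuclideanSpace.single k 1)) x (EuclideanSpace.single i 1)

/-- The Laplacian of `u` at `x`: the sum of the second partial derivatives ∂²u/∂xᵢ². -/
noncomputable def lap {n : ℕ} (u : EuclideanSpace ℝ (Fin n) → ℝ)
    (x : EuclideanSpace ℝ (Fin n)) : ℝ :=
  ∑ i, pd2 u x i i


/-- |D²u(x)|² : the sum over all i, k of (∂²u/∂xᵢ∂xₖ)². -/
noncomputable def hessSq {n : ℕ} (u : EuclideanSpace ℝ (Fin n) → ℝ)
    (x : EuclideanSpace ℝ (Fin n)) : ℝ :=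
  ∑ i, ∑ k, (pd2 u x i k) ^ 2

open Filter Topology

section PartialDeriv

variable {n : ℕ}

local notation "E" => EuclideanSpace ℝ (Fin n)

noncomputable def partialDeriv (k : Fin n) (f : E → ℝ) : E → ℝ :=
  fun y => fderiv ℝ f y (EuclideanSpace.single k 1)

lemma pd2_eq_partialDeriv (f : E → ℝ) (x : E) (i k : Fin n) :
    pd2 f x i k = partialDeriv i (partialDeriv k f) x := rfl

lemma lap_eq_sum_partialDeriv (f : E → ℝ) :
    lap f = fun x => ∑ i, partialDeriv i (partialDeriv i f) x := rfl

lemma gradient_apply_eq_partialDeriv (f : E → ℝ) (x : E) (k : Fin n) :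
    gradient f x k = partialDeriv k f x := by
  simp [partialDeriv, ← inner_gradient_left, EuclideanSpace.inner_single_right]

lemma EuclideanSpace.inner_eq_sum_mul {ι : Type*} [Fintype ι] (v w : EuclideanSpace ℝ ι) :
    ⟪v, w⟫ = ∑ k, v k * w k := by
  simp [PiLp.inner_apply, mul_comm]

lemma inner_gradient_gradient (f g : E → ℝ) (x y : E) :
    ⟪gradient f x, gradient g y⟫ = ∑ k, partialDeriv k f x * partialDeriv k g y := by
  simp only [EuclideanSpace.inner_eq_sum_mul, gradient_apply_eq_partialDeriv]

lemma partialDeriv_mul {f g : E → ℝ} {x : E} (hf : DifferentiableAt ℝ f x)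
    (hg : DifferentiableAt ℝ g x) (k : Fin n) :
    partialDeriv k (fun y => f y * g y) x
      = partialDeriv k f x * g x + f x * partialDeriv k g x := by
  simp only [partialDeriv, fderiv_fun_mul hf hg, add_apply, smul_apply, smul_eq_mul]
  ring

lemma partialDeriv_sum {ι : Type*} {s : Finset ι} {f : ι → E → ℝ} {x : E}
    (hf : ∀ j ∈ s, DifferentiableAt ℝ (f j) x) (k : Fin n) :
    partialDeriv k (fun y => ∑ j ∈ s, f j y) x = ∑ j ∈ s, partialDeriv k (f j) x := by
  simp only [partialDeriv, fderiv_fun_sum hf, sum_apply]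

lemma partialDeriv_const_mul (c : ℝ) (f : E → ℝ) (k : Fin n) :
    partialDeriv k (fun y => c * f y) = fun y => c * partialDeriv k f y := by
  funext y
  exact congrArg (fun L : E →L[ℝ] ℝ => L (EuclideanSpace.single k 1))
    (congrFun (fderiv_const_smul_field c (f := f)) y)

lemma Filter.EventuallyEq.partialDeriv_eq {f g : E → ℝ} {x : E} (h : f =ᶠ[𝓝 x] g)
    (k : Fin n) : partialDeriv k f x = partialDeriv k g x := by
  simp only [partialDeriv, h.fderiv_eq]

lemma ContDiffOn.partialDeriv {f : E → ℝ} {U : Set E} {m l : WithTop ℕ∞}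
    (hf : ContDiffOn ℝ l f U) (hU : IsOpen U) (hml : m + 1 ≤ l) (k : Fin n) :
    ContDiffOn ℝ m (partialDeriv k f) U :=
  (hf.fderiv_of_isOpen hU hml).clm_apply contDiffOn_const

lemma partialDeriv_partialDeriv_eq_fderiv_fderiv {f : E → ℝ} {x : E}
    (hf : DifferentiableAt ℝ (fderiv ℝ f) x) (i k : Fin n) :
    partialDeriv i (partialDeriv k f) x
      = fderiv ℝ (fderiv ℝ f) x (EuclideanSpace.single i 1) (EuclideanSpace.single k 1) := by
  unfold partialDeriv
  simp [fderiv_clm_apply hf (differentiableAt_const _)]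

lemma partialDeriv_comm {f : E → ℝ} {x : E} (hf : ContDiffAt ℝ 2 f x) (i k : Fin n) :
    partialDeriv i (partialDeriv k f) x = partialDeriv k (partialDeriv i f) x := by
  have hd : DifferentiableAt ℝ (fderiv ℝ f) x :=
    (hf.fderiv_right (m := 1) (by norm_num)).differentiableAt one_ne_zero
  rw [partialDeriv_partialDeriv_eq_fderiv_fderiv hd,
    partialDeriv_partialDeriv_eq_fderiv_fderiv hd]
  exact hf.isSymmSndFDerivAt (by simp) _ _

lemma fderiv_euclideanSpace_apply {ι F : Type*} [Fintype ι] [NormedAddCommGroup F]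
    [NormedSpace ℝ F] {g : F → EuclideanSpace ℝ ι} {x : F} (hg : DifferentiableAt ℝ g x)
    (v : F) (k : ι) : fderiv ℝ g x v k = fderiv ℝ (fun y => g y k) x v := by
  have h : HasFDerivAt (fun y => g y k) ((PiLp.proj 2 (fun _ => ℝ) k).comp (fderiv ℝ g x)) x :=
    HasFDerivAt.comp (g := fun f : EuclideanSpace ℝ ι => f k) x
      (PiLp.hasFDerivAt_apply 2 (g x) k) hg.hasFDerivAt
  rw [h.fderiv]
  rfl

lemma differentiableAt_gradient {u : E → ℝ} {x : E}
    (hu : ∀ k, DifferentiableAt ℝ (partialDeriv k u) x) :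
    DifferentiableAt ℝ (gradient u) x := by
  rw [differentiableAt_piLp]
  simpa only [gradient_apply_eq_partialDeriv] using hu

lemma inner_fderiv_gradient_single {u : E → ℝ} {x : E}
    (hu : ∀ k, DifferentiableAt ℝ (partialDeriv k u) x) (v : E) (i : Fin n) :
    ⟪v, fderiv ℝ (gradient u) x (EuclideanSpace.single i 1)⟫ = ∑ k, v k * pd2 u x i k := by
  simp only [EuclideanSpace.inner_eq_sum_mul,
    fderiv_euclideanSpace_apply (differentiableAt_gradient hu), gradient_apply_eq_partialDeriv]
  rfl

lemma partialDeriv_comp_gradient {H : E → ℝ} {u : E → ℝ} {x : E}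
    (hH : DifferentiableAt ℝ H (gradient u x))
    (hu : ∀ k, DifferentiableAt ℝ (partialDeriv k u) x) (i : Fin n) :
    partialDeriv i (fun y => H (gradient u y)) x
      = ∑ k, partialDeriv k H (gradient u x) * pd2 u x i k := by
  rw [partialDeriv, fderiv_fun_comp x hH (differentiableAt_gradient hu),
    ContinuousLinearMap.comp_apply, ← inner_gradient_left, inner_fderiv_gradient_single hu]
  simp only [gradient_apply_eq_partialDeriv]

lemma partialDeriv_half_sq_norm_gradient {u : E → ℝ} {x : E}
    (hu : ∀ k, DifferentiableAt ℝ (partialDeriv k u) x) (i : Fin n) :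
    partialDeriv i (fun y => ‖gradient u y‖ ^ 2 / 2) x
      = ∑ k, partialDeriv k u x * pd2 u x i k := by
  have hw : (fun y => ‖gradient u y‖ ^ 2 / 2) = fun y => 2⁻¹ * ‖gradient u y‖ ^ 2 := by
    funext y
    ring
  rw [hw, partialDeriv_const_mul]
  beta_reduce
  rw [partialDeriv, (differentiableAt_gradient hu).hasFDerivAt.norm_sq.fderiv]
  simp [inner_fderiv_gradient_single hu, gradient_apply_eq_partialDeriv]

lemma partialDeriv_partialDeriv_partialDeriv_comm {u : E → ℝ} {U : Set E}
    (hu : ContDiffOn ℝ 3 u U) (hU : IsOpen U) {x : E} (hx : x ∈ U) (i j k : Fin n) :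
    partialDeriv i (partialDeriv j (partialDeriv k u)) x
      = partialDeriv k (partialDeriv i (partialDeriv j u)) x := by
  have hjk : partialDeriv j (partialDeriv k u) =ᶠ[𝓝 x] partialDeriv k (partialDeriv j u) :=
    eventually_of_mem (hU.mem_nhds hx) fun y hy =>
      partialDeriv_comm ((hu.contDiffAt (hU.mem_nhds hy)).of_le (by norm_num)) j k
  rw [hjk.partialDeriv_eq]
  exact partialDeriv_comm
    ((hu.partialDeriv hU (by norm_num) j).contDiffAt (hU.mem_nhds hx)) i k

lemma lap_half_sq_norm_gradient {u : E → ℝ} {U : Set E} (hu : ContDiffOn ℝ 3 u U)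
    (hU : IsOpen U) {x : E} (hx : x ∈ U) :
    lap (fun y => ‖gradient u y‖ ^ 2 / 2) x
      = hessSq u x + ∑ k, partialDeriv k u x * partialDeriv k (lap u) x := by
  have hu1 : ∀ y ∈ U, ∀ k, DifferentiableAt ℝ (partialDeriv k u) y := fun y hy k =>
    ((hu.partialDeriv hU (m := 2) (by norm_num) k).contDiffAt (hU.mem_nhds hy)).differentiableAt
      (by norm_num)
  have hu2 : ∀ i k, DifferentiableAt ℝ (partialDeriv i (partialDeriv k u)) x := fun i k =>
    (((hu.partialDeriv hU (m := 2) (by norm_num) k).partialDeriv hU (m := 1) (by norm_num)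
      i).contDiffAt (hU.mem_nhds hx)).differentiableAt (by norm_num)
  have hw : ∀ i, partialDeriv i (fun y => ‖gradient u y‖ ^ 2 / 2)
      =ᶠ[𝓝 x] fun y => ∑ k, partialDeriv k u y * partialDeriv i (partialDeriv k u) y :=
    fun i => eventually_of_mem (hU.mem_nhds hx) fun y hy =>
      partialDeriv_half_sq_norm_gradient (hu1 y hy) i
  have hlap : ∀ k, partialDeriv k (lap u) x
      = ∑ i, partialDeriv k (partialDeriv i (partialDeriv i u)) x := fun k => by
    rw [lap_eq_sum_partialDeriv, partialDeriv_sum fun i _ => hu2 i i]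
  calc lap (fun y => ‖gradient u y‖ ^ 2 / 2) x
      = ∑ i, ∑ k, (pd2 u x i k ^ 2
          + partialDeriv k u x * partialDeriv i (partialDeriv i (partialDeriv k u)) x) := by
        refine Finset.sum_congr rfl fun i _ => ?_
        rw [pd2_eq_partialDeriv, (hw i).partialDeriv_eq,
          partialDeriv_sum
            (f := fun k y => partialDeriv k u y * partialDeriv i (partialDeriv k u) y)
            fun k _ => (hu1 x hx k).mul (hu2 i k)]
        refine Finset.sum_congr rfl fun k _ => ?_
        rw [partialDeriv_mul (hu1 x hx k) (hu2 i k), pd2_eq_partialDeriv]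
        ring
    _ = hessSq u x + ∑ k, partialDeriv k u x * partialDeriv k (lap u) x := by
        simp only [hessSq, Finset.sum_add_distrib, hlap, Finset.mul_sum]
        congr 1
        rw [Finset.sum_comm]
        refine Finset.sum_congr rfl fun k _ => Finset.sum_congr rfl fun i _ => ?_
        rw [partialDeriv_partialDeriv_partialDeriv_comm hu hU hx i i k]

lemma inner_gradient_gradient_half_sq_norm_gradient {H u : E → ℝ} {x : E}
    (hH : DifferentiableAt ℝ H (gradient u x)) (hu : ContDiffAt ℝ 2 u x) :
    ⟪gradient H (gradient u x), gradient (fun y => ‖gradient u y‖ ^ 2 / 2) x⟫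
      = ∑ k, partialDeriv k u x * partialDeriv k (fun y => H (gradient u y)) x := by
  have hu1 : ∀ k, DifferentiableAt ℝ (partialDeriv k u) x := fun k =>
    ((hu.fderiv_right (m := 1) le_rfl).clm_apply contDiffAt_const).differentiableAt one_ne_zero
  simp only [inner_gradient_gradient, partialDeriv_half_sq_norm_gradient hu1,
    partialDeriv_comp_gradient hH hu1, Finset.mul_sum, pd2_eq_partialDeriv]
  rw [Finset.sum_comm]
  refine Finset.sum_congr rfl fun k _ => Finset.sum_congr rfl fun i _ => ?_
  rw [partialDeriv_comm hu i k]
  ring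

end PartialDeriv

theorem stmt8_general (n : ℕ) (ε : ℝ)
    (U : Set (EuclideanSpace ℝ (Fin n))) (hUopen : IsOpen U)
    (H : EuclideanSpace ℝ (Fin n) → ℝ) (hH : ContDiff ℝ 1 H)
    (u : EuclideanSpace ℝ (Fin n) → ℝ) (hu : ContDiffOn ℝ 3 u U)
    (heq : ∀ x ∈ U, H (gradient u x) = ε * lap u x) :
    ∀ x ∈ U,
      ⟪gradient H (gradient u x), gradient (fun y => ‖gradient u y‖ ^ 2 / 2) x⟫
      = ε * lap (fun y => ‖gradient u y‖ ^ 2 / 2) x - ε * hessSq u x := by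
  intro x hx
  have hPDE : ∀ k, partialDeriv k (fun y => H (gradient u y)) x
      = ε * partialDeriv k (lap u) x := fun k => by
    have h : (fun y => H (gradient u y)) =ᶠ[𝓝 x] fun y => ε * lap u y :=
      eventually_of_mem (hUopen.mem_nhds hx) heq
    rw [h.partialDeriv_eq, partialDeriv_const_mul]
  rw [inner_gradient_gradient_half_sq_norm_gradient (hH.differentiable one_ne_zero _)
      ((hu.contDiffAt (hUopen.mem_nhds hx)).of_le (by norm_num)),
    lap_half_sq_norm_gradient hu hUopen hx, mul_add, add_sub_cancel_left, Finset.mul_sum]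
  exact Finset.sum_congr rfl fun k _ => by rw [hPDE]; ring

theorem stmt8 (n : ℕ) (hn : 1 ≤ n) (ε : ℝ) (hε : 0 < ε)
    (U : Set (EuclideanSpace ℝ (Fin n))) (hUopen : IsOpen U)
    (H : EuclideanSpace ℝ (Fin n) → ℝ) (hH : ContDiff ℝ 1 H)
    (u : EuclideanSpace ℝ (Fin n) → ℝ) (hu : ContDiffOn ℝ 3 u U)
    (heq : ∀ x ∈ U, H (gradient u x) = ε * lap u x) :
    ∀ x ∈ U,
      ⟪gradient H (gradient u x), gradient (fun y => ‖gradient u y‖ ^ 2 / 2) x⟫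
      = ε * lap (fun y => ‖gradient u y‖ ^ 2 / 2) x - ε * hessSq u x :=
  stmt8_general n ε U hUopen H hH u hu heq
end

section
/- Let n ≥ 1, θ > 0, fix P ∈ ℝⁿ, let H : ℝⁿ × ℝⁿ → ℝ be continuously differentiable, and let z : ℝⁿ → ℝ be three times continuously differentiable and satisfy θ z(y) + H(P + ∇z(y), y) = θ² Δz(y) for every y ∈ ℝⁿ. Then the function w(y) := |∇z(y)|²/2 satisfies, at every y ∈ ℝⁿ, the identity 2θ w(y) + D_pH(P + ∇z(y), y) · ∇w(y) + D_yH(P + ∇z(y), y) · ∇z(y) = θ² Δw(y) − θ² |D²z(y)|². -/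
open scoped RealInnerProductSpace

/-!
Write `w = |∇z|² / 2`. By symmetry of the Hessian, `∇w = D²z ∇z`, and Bochner's formula in flat
space, which rests on the symmetry of third derivatives, gives `Δw = |D²z|² + ∇z · ∇(Δz)`.
Differentiating the equation in the direction `∇z(y)` gives
`θ |∇z|² + D_pH · D²z ∇z + D_yH · ∇z = θ² ∇z · ∇(Δz)`, and substituting the two identities
above turns this into the claim.
-/

section Directional

variable {E F G : Type*} [NormedAddCommGroup E] [NormedSpace ℝ E] [NormedAddCommGroup F]
  [NormedSpace ℝ F] [NormedAddCommGroup G] [NormedSpace ℝ G]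

theorem fderiv_clm_apply_const_apply {c : E → F →L[ℝ] G} {x : E} (hc : DifferentiableAt ℝ c x)
    (u : F) (v : E) : fderiv ℝ (fun y => c y u) x v = fderiv ℝ c x v u := by
  rw [fderiv_clm_apply hc (differentiableAt_const u)]
  simp

theorem ContDiff.fderiv_right_apply {m n : WithTop ℕ∞} {f : E → F} (hf : ContDiff ℝ n f)
    (hmn : m + 1 ≤ n) (v : E) : ContDiff ℝ m (fun y => fderiv ℝ f y v) :=
  (hf.fderiv_right hmn).clm_apply contDiff_const

theorem fderiv_fderiv_apply_comm {f : E → F} {x : E} (hf : ContDiffAt ℝ 2 f x) (v w : E) :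
    fderiv ℝ (fun y => fderiv ℝ f y w) x v = fderiv ℝ (fun y => fderiv ℝ f y v) x w := by
  have hd : DifferentiableAt ℝ (fderiv ℝ f) x :=
    (hf.fderiv_right (m := 1) le_rfl).differentiableAt one_ne_zero
  rw [fderiv_clm_apply_const_apply hd, fderiv_clm_apply_const_apply hd]
  exact hf.isSymmSndFDerivAt (by simp [minSmoothness_of_isRCLikeNormedField]) v w

theorem fderiv_comp_prodMk_apply {H : E × F → G} {g : F → E} {y : F}
    (hH : DifferentiableAt ℝ H (g y, y)) (hg : DifferentiableAt ℝ g y) (v : F) :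
    fderiv ℝ (fun y' => H (g y', y')) y v
      = fderiv ℝ (fun q => H (q, y)) (g y) (fderiv ℝ g y v)
        + fderiv ℝ (fun y' => H (g y, y')) y v := by
  have hH' := hH.hasFDerivAt
  have hcomp : HasFDerivAt (fun y' => H (g y', y'))
      ((fderiv ℝ H (g y, y)).comp ((fderiv ℝ g y).prod (.id ℝ F))) y :=
    hH'.comp (f := fun y' => (g y', y')) y (hg.hasFDerivAt.prodMk (hasFDerivAt_id y))
  have hfst : HasFDerivAt (fun q => H (q, y)) ((fderiv ℝ H (g y, y)).comp (.inl ℝ E F)) (g y) :=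
    hH'.comp (g y) (hasFDerivAt_prodMk_left (g y) y)
  have hsnd : HasFDerivAt (fun y' => H (g y, y')) ((fderiv ℝ H (g y, y)).comp (.inr ℝ E F)) y :=
    hH'.comp y (hasFDerivAt_prodMk_right (g y) y)
  rw [hcomp.fderiv, hfst.fderiv, hsnd.fderiv]
  simp [← map_add]

end Directional

section InnerProductSpace

variable {E F : Type*} [NormedAddCommGroup E] [NormedSpace ℝ E]
  [NormedAddCommGroup F] [InnerProductSpace ℝ F]

theorem fderiv_half_norm_sq_apply {f : E → F} {x : E} (hf : DifferentiableAt ℝ f x) (v : E) :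
    fderiv ℝ (fun y => ‖f y‖ ^ 2 / 2) x v = ⟪f x, fderiv ℝ f x v⟫ := by
  simp only [div_eq_mul_inv]
  rw [(hf.hasFDerivAt.norm_sq.mul_const (2⁻¹ : ℝ)).fderiv]
  simp

end InnerProductSpace

section Gradient

variable {E : Type*} [NormedAddCommGroup E] [InnerProductSpace ℝ E] [CompleteSpace E]
  {u : E → ℝ}

theorem ContDiff.gradient {m n : WithTop ℕ∞} (hu : ContDiff ℝ n u) (hmn : m + 1 ≤ n) :
    ContDiff ℝ m (gradient u) :=
  (InnerProductSpace.toDual ℝ E).symm.contDiff.comp (hu.fderiv_right hmn)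

theorem inner_fderiv_gradient_apply {x : E} (hu : DifferentiableAt ℝ (gradient u) x) (v w : E) :
    ⟪fderiv ℝ (gradient u) x v, w⟫ = fderiv ℝ (fun y => fderiv ℝ u y w) x v := by
  have h : (fun y => fderiv ℝ u y w) = fun y => ⟪gradient u y, w⟫ :=
    funext fun y => (inner_gradient_left ..).symm
  rw [h, fderiv_inner_apply ℝ hu (differentiableAt_const w)]
  simp

theorem inner_fderiv_gradient_comm (hu : ContDiff ℝ 2 u) (x v w : E) :
    ⟪fderiv ℝ (gradient u) x v, w⟫ = ⟪fderiv ℝ (gradient u) x w, v⟫ := by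
  have hd : DifferentiableAt ℝ (gradient u) x :=
    (hu.gradient (m := 1) le_rfl).differentiable one_ne_zero x
  rw [inner_fderiv_gradient_apply hd, inner_fderiv_gradient_apply hd]
  exact fderiv_fderiv_apply_comm hu.contDiffAt v w

theorem inner_gradient_half_norm_sq_gradient (hu : ContDiff ℝ 2 u) (x a : E) :
    ⟪a, gradient (fun y => ‖gradient u y‖ ^ 2 / 2) x⟫
      = ⟪a, fderiv ℝ (gradient u) x (gradient u x)⟫ := by
  have hd : DifferentiableAt ℝ (gradient u) x :=
    (hu.gradient (m := 1) le_rfl).differentiable one_ne_zero x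
  rw [inner_gradient_right, fderiv_half_norm_sq_apply hd, conj_trivial, real_inner_comm,
    inner_fderiv_gradient_comm hu, real_inner_comm]

theorem inner_fderiv_fderiv_gradient_apply (hu : ContDiff ℝ 3 u) (x v w a : E) :
    ⟪fderiv ℝ (fun y => fderiv ℝ (gradient u) y v) x w, a⟫
      = fderiv ℝ (fun y => fderiv ℝ (fun y' => fderiv ℝ u y' v) y w) x a := by
  have hG : ContDiff ℝ 2 (gradient u) := hu.gradient (by norm_num)
  have hGv : DifferentiableAt ℝ (fun y => fderiv ℝ (gradient u) y v) x :=
    (hG.fderiv_right_apply (m := 1) (by norm_num) v).differentiable one_ne_zero x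
  have hswap : (fun y => ⟪fderiv ℝ (gradient u) y v, a⟫)
      = fun y => fderiv ℝ (fun y' => fderiv ℝ u y' v) y a := by
    funext y
    rw [inner_fderiv_gradient_apply (hG.differentiable (by norm_num) y),
      fderiv_fderiv_apply_comm (hu.of_le (by norm_num)).contDiffAt]
  calc ⟪fderiv ℝ (fun y => fderiv ℝ (gradient u) y v) x w, a⟫
      = fderiv ℝ (fun y => ⟪fderiv ℝ (gradient u) y v, a⟫) x w := by
        rw [fderiv_inner_apply ℝ hGv (differentiableAt_const a)]
        simp
    _ = fderiv ℝ (fun y => fderiv ℝ (fun y' => fderiv ℝ u y' v) y w) x a := by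
        rw [hswap, fderiv_fderiv_apply_comm
          (hu.fderiv_right_apply (m := 2) (by norm_num) v).contDiffAt]

theorem fderiv_fderiv_half_norm_sq_gradient (hu : ContDiff ℝ 3 u) (x v : E) :
    fderiv ℝ (fun y => fderiv ℝ (fun y' => ‖gradient u y'‖ ^ 2 / 2) y v) x v
      = ‖fderiv ℝ (gradient u) x v‖ ^ 2
        + fderiv ℝ (fun y => fderiv ℝ (fun y' => fderiv ℝ u y' v) y v) x (gradient u x) := by
  have hG : ContDiff ℝ 2 (gradient u) := hu.gradient (by norm_num)
  have hGv : DifferentiableAt ℝ (fun y => fderiv ℝ (gradient u) y v) x :=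
    (hG.fderiv_right_apply (m := 1) (by norm_num) v).differentiable one_ne_zero x
  have hw : (fun y => fderiv ℝ (fun y' => ‖gradient u y'‖ ^ 2 / 2) y v)
      = fun y => ⟪gradient u y, fderiv ℝ (gradient u) y v⟫ := by
    funext y
    exact fderiv_half_norm_sq_apply (hG.differentiable (by norm_num) y) v
  rw [hw, fderiv_inner_apply ℝ (hG.differentiable (by norm_num) x) hGv, real_inner_comm,
    inner_fderiv_fderiv_gradient_apply hu, real_inner_self_eq_norm_sq, add_comm]

end Gradient

section Euclidean

variable {n : ℕ} {u : EuclideanSpace ℝ (Fin n) → ℝ}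

theorem hessSq_eq_sum_norm_sq {x : EuclideanSpace ℝ (Fin n)}
    (hu : DifferentiableAt ℝ (gradient u) x) :
    hessSq u x = ∑ k, ‖fderiv ℝ (gradient u) x (EuclideanSpace.single k 1)‖ ^ 2 := by
  have hcoord : ∀ k i, fderiv ℝ (gradient u) x (EuclideanSpace.single k 1) i = pd2 u x k i := by
    intro k i
    rw [pd2, ← inner_fderiv_gradient_apply hu, EuclideanSpace.inner_single_right]
    simp
  simp only [EuclideanSpace.real_norm_sq_eq, hcoord, hessSq]

theorem ContDiff.differentiable_pd2 (hu : ContDiff ℝ 3 u) (i k : Fin n) :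
    Differentiable ℝ (fun y => pd2 u y i k) :=
  ((hu.fderiv_right_apply (m := 2) (by norm_num) _).fderiv_right_apply (m := 1)
    (by norm_num) _).differentiable one_ne_zero

theorem ContDiff.differentiable_lap (hu : ContDiff ℝ 3 u) : Differentiable ℝ (lap u) :=
  Differentiable.fun_sum fun k _ => hu.differentiable_pd2 k k

theorem lap_half_norm_sq_gradient (hu : ContDiff ℝ 3 u) (x : EuclideanSpace ℝ (Fin n)) :
    lap (fun y => ‖gradient u y‖ ^ 2 / 2) x = hessSq u x + fderiv ℝ (lap u) x (gradient u x) := by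
  have hG : Differentiable ℝ (gradient u) := (hu.gradient (m := 2) (by norm_num)).differentiable
    (by norm_num)
  rw [hessSq_eq_sum_norm_sq (hG x), show lap u = fun y => ∑ k, pd2 u y k k from rfl,
    fderiv_fun_sum fun k _ => hu.differentiable_pd2 k k x]
  simp only [FunLike.coe_sum, Finset.sum_apply, ← Finset.sum_add_distrib]
  exact Finset.sum_congr rfl fun k _ => fderiv_fderiv_half_norm_sq_gradient hu x _

end Euclidean

theorem fderiv_cell_problem_apply {n : ℕ} {θ : ℝ}
    {P : EuclideanSpace ℝ (Fin n)}
    {H : EuclideanSpace ℝ (Fin n) × EuclideanSpace ℝ (Fin n) → ℝ} (hH : Differentiable ℝ H)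
    {z : EuclideanSpace ℝ (Fin n) → ℝ} (hz : ContDiff ℝ 3 z)
    (heq : ∀ y, θ * z y + H (P + gradient z y, y) = θ ^ 2 * lap z y)
    (y a : EuclideanSpace ℝ (Fin n)) :
    θ * ⟪gradient z y, a⟫
        + ⟪gradient (fun q => H (q, y)) (P + gradient z y), fderiv ℝ (gradient z) y a⟫
        + ⟪gradient (fun w => H (P + gradient z y, w)) y, a⟫
      = θ ^ 2 * fderiv ℝ (lap z) y a := by
  have hG : Differentiable ℝ (gradient z) :=
    (hz.gradient (m := 2) (by norm_num)).differentiable (by norm_num)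
  have hHG : DifferentiableAt ℝ (fun x => H (P + gradient z x, x)) y :=
    (hH _).comp y (((hG y).const_add P).prodMk differentiableAt_id)
  have hderiv := congrArg (fun f => fderiv ℝ f y a) (funext heq)
  rw [fderiv_fun_add ((hz.differentiable (by norm_num) y).const_mul θ) hHG,
    fderiv_const_mul (hz.differentiable (by norm_num) y),
    fderiv_const_mul (hz.differentiable_lap y)] at hderiv
  simp only [add_apply, smul_apply, smul_eq_mul] at hderiv
  rw [fderiv_comp_prodMk_apply (hH _) ((hG y).const_add P), fderiv_const_add] at hderiv
  simpa only [inner_gradient_left, add_assoc] using hderiv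

theorem stmt14_general (n : ℕ) (θ : ℝ)
    (P : EuclideanSpace ℝ (Fin n))
    (H : EuclideanSpace ℝ (Fin n) × EuclideanSpace ℝ (Fin n) → ℝ) (hH : ContDiff ℝ 1 H)
    (z : EuclideanSpace ℝ (Fin n) → ℝ) (hz : ContDiff ℝ 3 z)
    (heq : ∀ y, θ * z y + H (P + gradient z y, y) = θ ^ 2 * lap z y) :
    ∀ y, 2 * θ * (‖gradient z y‖ ^ 2 / 2)
        + ⟪gradient (fun q => H (q, y)) (P + gradient z y),
            gradient (fun y' => ‖gradient z y'‖ ^ 2 / 2) y⟫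
        + ⟪gradient (fun w => H (P + gradient z y, w)) y, gradient z y⟫
      = θ ^ 2 * lap (fun y' => ‖gradient z y'‖ ^ 2 / 2) y - θ ^ 2 * hessSq z y := by
  intro y
  have hpde :=
    fderiv_cell_problem_apply (hH.differentiable one_ne_zero) hz heq y (gradient z y)
  rw [real_inner_self_eq_norm_sq] at hpde
  rw [inner_gradient_half_norm_sq_gradient (hz.of_le (by norm_num)),
    lap_half_norm_sq_gradient hz]
  linear_combination hpde

theorem stmt14 (n : ℕ) (hn : 1 ≤ n) (θ : ℝ) (hθ : 0 < θ)
    (P : EuclideanSpace ℝ (Fin n))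
    (H : EuclideanSpace ℝ (Fin n) × EuclideanSpace ℝ (Fin n) → ℝ) (hH : ContDiff ℝ 1 H)
    (z : EuclideanSpace ℝ (Fin n) → ℝ) (hz : ContDiff ℝ 3 z)
    (heq : ∀ y, θ * z y + H (P + gradient z y, y) = θ ^ 2 * lap z y) :
    ∀ y, 2 * θ * (‖gradient z y‖ ^ 2 / 2)
        + ⟪gradient (fun q => H (q, y)) (P + gradient z y),
            gradient (fun y' => ‖gradient z y'‖ ^ 2 / 2) y⟫
        + ⟪gradient (fun w => H (P + gradient z y, w)) y, gradient z y⟫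
      = θ ^ 2 * lap (fun y' => ‖gradient z y'‖ ^ 2 / 2) y - θ ^ 2 * hessSq z y :=
  stmt14_general n θ P H hH z hz heq
end
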